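/- For every integer ℓ ≥ 3, a(ℓ,0) − (1/2)·( b(ℓ,0) + b(ℓ−1,0) ) = (1/(4π(ℓ+1)(ℓ+3)))·( (ℓ² + 4ℓ + 15)/((ℓ+1)(ℓ+3)) − 18/85 ), and this quantity is strictly positive. -/

import Mathlib

/-!
At `m₁ = 0` the square-root factor of `b` equals `1`, so both sides of the identity are rational
functions of `ℓ` and `1/π`, and clearing denominators proves it. Positivity reduces to
`18 (ℓ + 1)(ℓ + 3) < 85 (ℓ² + 4ℓ + 15)`, which holds for every `ℓ ≥ 0`.
-/

/-- The diagonal coefficient `a(ℓ, m₁)` of the tridiagonal quadratic form. -/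
noncomputable def acoef (ℓ : ℕ) (m₁ : ℤ) : ℝ :=
  (1 / (4 * Real.pi)) *
      ((ℓ : ℝ) ^ 4 + 8 * (ℓ : ℝ) ^ 3 + 11 * (ℓ : ℝ) ^ 2 - 20 * (ℓ : ℝ) - 12
        + 6 * (m₁ : ℝ) ^ 2 + 18 * (m₁ : ℝ)) / (((ℓ : ℝ) + 1) ^ 2 * ((ℓ : ℝ) + 3) ^ 2)
    - (36 / 85) * (1 / (8 * Real.pi)) * ((ℓ : ℝ) + 2) ^ 2 / (((ℓ : ℝ) + 1) * ((ℓ : ℝ) + 3))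

/-- The off-diagonal coefficient `b(ℓ, m₁)` of the tridiagonal quadratic form. -/
noncomputable def bcoef (ℓ : ℕ) (m₁ : ℤ) : ℝ :=
  Real.sqrt ((((ℓ : ℝ) + 1 - (m₁ : ℝ)) * ((ℓ : ℝ) + 4 + (m₁ : ℝ))) /
      (((ℓ : ℝ) + 1) * ((ℓ : ℝ) + 4))) *
    ((1 / (4 * Real.pi)) * (((ℓ : ℝ) - 1) * ((ℓ : ℝ) + 6)) / (((ℓ : ℝ) + 2) * ((ℓ : ℝ) + 3))
      - (36 / 85) * (1 / (8 * Real.pi)))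

lemma bcoef_zero (n : ℕ) :
    bcoef n 0 = (1 / (4 * Real.pi)) * (((n : ℝ) - 1) * ((n : ℝ) + 6)) /
        (((n : ℝ) + 2) * ((n : ℝ) + 3)) - (36 / 85) * (1 / (8 * Real.pi)) := by
  have h : (0 : ℝ) < ((n : ℝ) + 1) * ((n : ℝ) + 4) := by positivity
  simp only [bcoef, Int.cast_zero, sub_zero, add_zero, div_self h.ne', Real.sqrt_one, one_mul]

lemma bcoef_pred_zero {n : ℕ} (hn : 1 ≤ n) :
    bcoef (n - 1) 0 = (1 / (4 * Real.pi)) * (((n : ℝ) - 2) * ((n : ℝ) + 5)) /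
        (((n : ℝ) + 1) * ((n : ℝ) + 2)) - (36 / 85) * (1 / (8 * Real.pi)) := by
  rw [bcoef_zero, Nat.cast_sub hn, Nat.cast_one]
  ring_nf

lemma acoef_zero_sub_mean_bcoef {n : ℕ} (hn : 1 ≤ n) :
    acoef n 0 - (1 / 2) * (bcoef n 0 + bcoef (n - 1) 0)
      = (1 / (4 * Real.pi * ((n : ℝ) + 1) * ((n : ℝ) + 3))) *
          (((n : ℝ) ^ 2 + 4 * (n : ℝ) + 15) / (((n : ℝ) + 1) * ((n : ℝ) + 3)) - 18 / 85) := by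
  have hπ : Real.pi ≠ 0 := Real.pi_ne_zero
  have h1 : (n : ℝ) + 1 ≠ 0 := by positivity
  have h2 : (n : ℝ) + 2 ≠ 0 := by positivity
  have h3 : (n : ℝ) + 3 ≠ 0 := by positivity
  rw [bcoef_zero, bcoef_pred_zero hn]
  simp only [acoef, Int.cast_zero]
  field_simp
  ring

lemma sub_eighteen_div_eightyFive_pos {x : ℝ} (hx : 0 ≤ x) :
    0 < (x ^ 2 + 4 * x + 15) / ((x + 1) * (x + 3)) - 18 / 85 := by
  rw [sub_pos, div_lt_div_iff₀ (by norm_num) (by positivity)]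
  nlinarith

/-- For every `ℓ ≥ 3`,
`a(ℓ,0) − (b(ℓ,0) + b(ℓ−1,0))/2
  = (1/(4π(ℓ+1)(ℓ+3)))·((ℓ² + 4ℓ + 15)/((ℓ+1)(ℓ+3)) − 18/85)`,
and this quantity is strictly positive. -/
theorem higher_rows_strict_dominance (ℓ : ℕ) (hℓ : 3 ≤ ℓ) :
    acoef ℓ 0 - (1 / 2) * (bcoef ℓ 0 + bcoef (ℓ - 1) 0)
      = (1 / (4 * Real.pi * ((ℓ : ℝ) + 1) * ((ℓ : ℝ) + 3))) *
          (((ℓ : ℝ) ^ 2 + 4 * (ℓ : ℝ) + 15) / (((ℓ : ℝ) + 1) * ((ℓ : ℝ) + 3)) - 18 / 85) ∧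
    0 < acoef ℓ 0 - (1 / 2) * (bcoef ℓ 0 + bcoef (ℓ - 1) 0) := by
  have heq := acoef_zero_sub_mean_bcoef (n := ℓ) (by omega)
  refine ⟨heq, heq ▸ mul_pos ?_ (sub_eighteen_div_eightyFive_pos ℓ.cast_nonneg)⟩
  have := Real.pi_pos
  positivity
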